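/- arXiv:2003.00740 — 2 statements merged into one kernel-verified Lean document; each statement's English description precedes it below -/
import Mathlib

section
/- For all real numbers t, u, w, d₁, d₂: if t·u = 1, t·(w − 1)·d₁ = u, and t·(2·w − 1)·d₂ + 2·(w − 1)·d₁ = 0, then w ≠ 1/2 and d₂ ≠ 0. -/
/-- At an irregular singularity of the first prolongation of the system
`t·v·u̇ − t·u + 1 = 0, v̇ − w = 0, ẇ = 0` (characterized, after setting `v = 0`,
by `t·u = 1`, `t·(w − 1)·u̇ = u` and `t·(2w − 1)·ü + 2·(w − 1)·u̇ = 0`), one can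
never have `w = 1/2` or `ü = 0`. -/
theorem stmt_10 (t u w d₁ d₂ : ℝ) (h1 : t * u = 1) (h2 : t * (w - 1) * d₁ = u)
    (h3 : t * (2 * w - 1) * d₂ + 2 * (w - 1) * d₁ = 0) :
    w ≠ 1 / 2 ∧ d₂ ≠ 0 := by
  constructor
  · rintro rfl
    have hd : d₁ = 0 := by nlinarith
    have : u = 0 := by rw [← h2, hd]; ring
    rw [this, mul_zero] at h1
    exact one_ne_zero h1.symm
  · rintro rfl
    have hd : (w - 1) * d₁ = 0 := by nlinarith
    have : u = 0 := by rw [← h2]; nlinarith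
    rw [this, mul_zero] at h1
    exact one_ne_zero h1.symm
end

section
/- Let k ≥ 1 be an integer and let t₀ be a real number. Then there do not exist formal power series u, v, w ∈ ℝ⟦X⟧ such that D w = 0, D v = w, and (X + t₀)·v·(D u) − (X + t₀)·u + 1 = 0, where the constant coefficient of v equals 0 and the constant coefficient of w equals 1/k. -/
open PowerSeries

/-!
With `v(t₀) = 0` and `w(t₀) = 1/k` the first two equations force `w = 1/k` and `v = X/k`, so
the third one says `(X + t₀) · g = 1` for `g = u - (X/k) · u'`, whose `n`-th coefficient is
`(1 - n/k) · uₙ`. The coefficient `g_k` therefore vanishes, while no coefficient of the inverse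
of `X + t₀` can: comparing coefficients, `gₙ = 0` forces `gₙ₋₁ = 0`, down to `t₀ · g₀ = 0 ≠ 1`.
-/

namespace PowerSeries

theorem coeff_X_mul_derivative {R : Type*} [CommSemiring R] (f : R⟦X⟧) (n : ℕ) :
    coeff n (X * derivative R f) = n * coeff n f := by
  cases n with
  | zero => simp
  | succ n => rw [coeff_succ_X_mul, coeff_derivative, mul_comm, Nat.cast_succ]

theorem coeff_ne_zero_of_X_add_C_mul_eq_one {R : Type*} [Semiring R] [Nontrivial R] {t : R}
    {g : R⟦X⟧} (h : (X + C t) * g = 1) (n : ℕ) : coeff n g ≠ 0 := by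
  have hstep : ∀ m, coeff (m + 1) g = 0 → coeff m g = 0 := fun m hm => by
    simpa [add_mul, coeff_succ_X_mul, coeff_C_mul, hm] using congrArg (coeff (m + 1)) h
  have hzero : coeff n g = 0 → coeff 0 g = 0 := by
    induction n with
    | zero => exact id
    | succ m ih => exact fun hm => ih (hstep m hm)
  intro hn
  have h0 := congrArg (coeff 0) h
  simp only [add_mul, map_add, coeff_zero_X_mul, coeff_C_mul, zero_add, hzero hn, mul_zero,
    coeff_zero_one] at h0
  exact zero_ne_one h0

end PowerSeries

/-- For `k ≥ 1` and any expansion point `t₀`, there is no formal power series solution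
`u, v, w ∈ ℝ⟦X⟧` of the system `ẇ = 0`, `v̇ = w`, `t·v·u̇ − t·u + 1 = 0` (with `t`
represented by `X + t₀`) whose initial data satisfy `v(t₀) = 0` and `w(t₀) = 1/k`. -/
theorem stmt_11 (k : ℕ) (hk : 1 ≤ k) (t₀ : ℝ) :
    ¬ ∃ u v w : ℝ⟦X⟧,
        PowerSeries.derivative ℝ w = 0 ∧
        PowerSeries.derivative ℝ v = w ∧
        (PowerSeries.X + PowerSeries.C t₀) * v * (PowerSeries.derivative ℝ u) -
          (PowerSeries.X + PowerSeries.C t₀) * u + 1 = 0 ∧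
        PowerSeries.constantCoeff v = 0 ∧
        PowerSeries.constantCoeff w = 1 / (k : ℝ) := by
  rintro ⟨u, v, w, hw, hv, heq, hv0, hw0⟩
  have hk0 : (k : ℝ) ≠ 0 := Nat.cast_ne_zero.mpr (by omega)
  have hw' : w = C (1 / k : ℝ) := derivative.ext (by simp [hw]) (by simp [hw0])
  have hv' : v = C (1 / k : ℝ) * X := derivative.ext (by simp [hv, hw']) (by simp [hv0])
  have hg : (X + C t₀) * (u - C (1 / k : ℝ) * (X * derivative ℝ u)) = 1 := by
    rw [hv'] at heq
    linear_combination -heq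
  refine coeff_ne_zero_of_X_add_C_mul_eq_one hg k ?_
  simp [coeff_X_mul_derivative, hk0]
end
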